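/- For all complex numbers x, y and all natural numbers n, the sum over k from 0 to n of x^k * (L_k(y) + (x*y - 2) * F_{k+1}(y)) equals x^(n+1) * y * F_{n+1}(y), where F_n(y) and L_n(y) are the Fibonacci and Lucas polynomials evaluated at y. -/
import Mathlib

open Finset

noncomputable def fibP (y : ℂ) : ℕ → ℂ
  | 0 => 0
  | 1 => 1
  | n + 2 => y * fibP y (n + 1) + fibP y n

noncomputable def lucasP (y : ℂ) : ℕ → ℂ
  | 0 => 2
  | 1 => y
  | n + 2 => y * lucasP y (n + 1) + lucasP y n

lemma lucas_eq (y : ℂ) : ∀ n, lucasP y n = 2 * fibP y (n + 1) - y * fibP y n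
  | 0 => by simp [lucasP, fibP]
  | 1 => by simp [lucasP, fibP]; ring
  | n + 2 => by
    rw [lucasP, lucas_eq y (n + 1), lucas_eq y n,
      show n + 2 + 1 = n + 1 + 2 from rfl]
    simp only [fibP]
    ring

theorem stmt8 (x y : ℂ) (n : ℕ) :
    ∑ k ∈ Finset.range (n + 1), x ^ k * (lucasP y k + (x * y - 2) * fibP y (k + 1)) =
      x ^ (n + 1) * y * fibP y (n + 1) := by
  induction n with
  | zero => simp [lucasP, fibP]
  | succ n ih =>
    rw [Finset.sum_range_succ, ih, lucas_eq, show n + 1 + 1 = n + 2 from rfl, fibP]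
    ring
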